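/- Let J = [0,α) ∪ [α+r, L+r) with 0 < α < L and r > 0. Then E(ℤ) is a Riesz sequence in L²(J) if and only if one of the following holds: (i) α ≥ 1 or L-α ≥ 1; (ii) {r} = 0 and L ≥ 1; (iii) 1 ≤ L < 2 and L + {r} ≥ 2. -/

import Mathlib

open MeasureTheory Real Set
open scoped ENNReal

noncomputable section

/-- The exponential `e^{2πi n x}` on `ℝ`. -/
def fExp1 (n : ℤ) (x : ℝ) : ℂ :=
  Complex.exp (2 * Real.pi * Complex.I * (n : ℝ) * x)

/-!
For `a : ℤ →₀ ℂ` the function `x ↦ ‖∑ aₙ e^{2πinx}‖²` is continuous, nonnegative and 1-periodic,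
and its integral over a period is `∑ ‖aₙ‖²`. Put `J = [0, α) ∪ [α + r, L + r)`.

If one of the three conditions holds, then `J + ℤ` covers a whole period, so the integral over `J`
is at least `∑ ‖aₙ‖²`; since `J ⊆ [0, ⌈L + r⌉)` it is at most `⌈L + r⌉ ∑ ‖aₙ‖²`.

Otherwise `J + ℤ` misses an interval `[c - δ, c + δ] + ℤ`. Take `aₙ = e^{-2πinc}` for `0 ≤ n < N`.
Then `∑ ‖aₙ‖² = N`. On `J` the sum `∑ aₙ e^{2πinx}` is a geometric sum whose ratio stays
away from `1`, so it is bounded independently of `N`. Hence no lower bound holds.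
-/

lemma fExp1_eq_exp (n : ℤ) (x : ℝ) :
    fExp1 n x = Complex.exp ((2 * π * Complex.I * n) * x) := by
  simp [fExp1]

lemma continuous_fExp1 (n : ℤ) : Continuous (fExp1 n) := by
  unfold fExp1; fun_prop

lemma norm_fExp1 (n : ℤ) (x : ℝ) : ‖fExp1 n x‖ = 1 := by
  rw [fExp1, show 2 * (π : ℂ) * Complex.I * (n : ℝ) * x = ((2 * π * n * x : ℝ) : ℂ) * Complex.I by
    push_cast; ring]
  exact Complex.norm_exp_ofReal_mul_I _

lemma fExp1_add (m n : ℤ) (x : ℝ) : fExp1 (m + n) x = fExp1 m x * fExp1 n x := by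
  simp only [fExp1, ← Complex.exp_add]
  push_cast
  ring_nf

lemma conj_fExp1 (n : ℤ) (x : ℝ) : starRingEnd ℂ (fExp1 n x) = fExp1 (-n) x := by
  rw [fExp1, ← Complex.exp_conj, fExp1]
  simp [map_ofNat]

lemma periodic_fExp1 (n : ℤ) : Function.Periodic (fExp1 n) 1 := by
  intro x
  rw [fExp1_eq_exp, fExp1_eq_exp, Complex.ofReal_add, Complex.ofReal_one, mul_add, mul_one,
    Complex.exp_add, show 2 * π * Complex.I * n = n * (2 * π * Complex.I) by ring,
    Complex.exp_int_mul_two_pi_mul_I, mul_one]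

lemma integral_fExp1 (k : ℤ) : ∫ x in (0 : ℝ)..1, fExp1 k x = if k = 0 then 1 else 0 := by
  split_ifs with hk
  · simp [hk, fExp1]
  · have hc : 2 * (π : ℂ) * Complex.I * k ≠ 0 := by simp [hk, Real.pi_ne_zero]
    simp only [fExp1_eq_exp]
    rw [integral_exp_mul_complex hc]
    simp [show 2 * π * Complex.I * k = k * (2 * π * Complex.I) by ring]

def trigSum (a : ℤ →₀ ℂ) (x : ℝ) : ℂ := ∑ n ∈ a.support, a n * fExp1 n x

lemma continuous_trigSum (a : ℤ →₀ ℂ) : Continuous (trigSum a) :=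
  continuous_finsetSum _ fun n _ => continuous_const.mul (continuous_fExp1 n)

lemma periodic_trigSum (a : ℤ →₀ ℂ) : Function.Periodic (trigSum a) 1 := fun x => by
  simp only [trigSum, periodic_fExp1 _ x]

lemma ofReal_norm_sq_trigSum (a : ℤ →₀ ℂ) (x : ℝ) :
    ((‖trigSum a x‖ ^ 2 : ℝ) : ℂ)
      = ∑ n ∈ a.support, ∑ m ∈ a.support, a n * starRingEnd ℂ (a m) * fExp1 (n - m) x := by
  rw [Complex.ofReal_pow, ← Complex.mul_conj', trigSum, map_sum, Finset.sum_mul_sum]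
  refine Finset.sum_congr rfl fun n _ => Finset.sum_congr rfl fun m _ => ?_
  rw [map_mul, conj_fExp1, sub_eq_add_neg, fExp1_add]
  ring

lemma integral_norm_sq_trigSum (a : ℤ →₀ ℂ) :
    ∫ x in (0 : ℝ)..1, ‖trigSum a x‖ ^ 2 = ∑ n ∈ a.support, ‖a n‖ ^ 2 := by
  have hcont : ∀ n m, Continuous fun x => a n * starRingEnd ℂ (a m) * fExp1 (n - m) x :=
    fun n m => continuous_const.mul (continuous_fExp1 _)
  apply Complex.ofReal_injective
  rw [← intervalIntegral.integral_ofReal]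
  simp_rw [ofReal_norm_sq_trigSum]
  rw [intervalIntegral.integral_finsetSum fun n _ =>
    (continuous_finsetSum _ fun m _ => hcont n m).intervalIntegrable 0 1]
  simp_rw [intervalIntegral.integral_finsetSum fun m _ => (hcont _ m).intervalIntegrable 0 1,
    intervalIntegral.integral_const_mul, integral_fExp1, sub_eq_zero, mul_ite, mul_one, mul_zero]
  push_cast
  exact Finset.sum_congr rfl fun n hn => by rw [Finset.sum_ite_eq, if_pos hn, Complex.mul_conj']

section PeriodicIntegral

variable {f : ℝ → ℝ}

lemma integral_unit_le_of_add_one_le (hf : Continuous f) (hper : Function.Periodic f 1)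
    (hnn : 0 ≤ f) {a b : ℝ} (hab : a + 1 ≤ b) :
    ∫ x in (0 : ℝ)..1, f x ≤ ∫ x in a..b, f x := by
  rw [← zero_add (1 : ℝ), hper.intervalIntegral_add_eq 0 a]
  exact intervalIntegral.integral_mono_interval le_rfl (by linarith) hab
    (Filter.Eventually.of_forall hnn) (hf.intervalIntegrable a b)

lemma integral_le_add_integral_of_overlap (hf : Continuous f) (hnn : 0 ≤ f) {a b c d : ℝ}
    (hcb : c ≤ b) (hbd : b ≤ d) :
    ∫ x in a..d, f x ≤ (∫ x in a..b, f x) + ∫ x in c..d, f x := by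
  rw [← intervalIntegral.integral_add_adjacent_intervals (hf.intervalIntegrable a b)
    (hf.intervalIntegrable b d)]
  gcongr
  exact intervalIntegral.integral_mono_interval hcb hbd le_rfl
    (Filter.Eventually.of_forall hnn) (hf.intervalIntegrable c d)

lemma integral_add_intCast (hper : Function.Periodic f 1) (a b : ℝ) (k : ℤ) :
    ∫ x in a + k..b + k, f x = ∫ x in a..b, f x := by
  rw [← intervalIntegral.integral_comp_add_right]
  simp only [by simpa using hper.int_mul k]

lemma setIntegral_le_of_subset_Ico (hf : Continuous f) (hper : Function.Periodic f 1)
    (hnn : 0 ≤ f) {s : Set ℝ} (N : ℕ) (hs : s ⊆ Ico 0 N) :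
    ∫ x in s, f x ≤ N * ∫ x in (0 : ℝ)..1, f x := by
  calc ∫ x in s, f x ≤ ∫ x in Ico 0 (N : ℝ), f x :=
        setIntegral_mono_set (hf.integrableOn_Icc.mono_set Ico_subset_Icc_self)
          (Filter.Eventually.of_forall hnn) hs.eventuallyLE
    _ = ∫ x in (0 : ℝ)..0 + (N : ℤ) • (1 : ℝ), f x := by
        rw [integral_Ico_eq_integral_Ioo, ← integral_Ioc_eq_integral_Ioo,
          intervalIntegral.integral_of_le (by positivity)]
        simp
    _ = N * ∫ x in (0 : ℝ)..1, f x := by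
        rw [hper.intervalIntegral_add_zsmul_eq N 0 hf.intervalIntegrable]
        simp

def twoIntervals (α L r : ℝ) : Set ℝ := Ico 0 α ∪ Ico (α + r) (L + r)

lemma setIntegral_twoIntervals (hf : Continuous f) (hper : Function.Periodic f 1) {α L r : ℝ}
    (hα : 0 ≤ α) (hαL : α ≤ L) (hr : 0 ≤ r) :
    ∫ x in twoIntervals α L r, f x
      = (∫ x in (0 : ℝ)..α, f x) + ∫ x in α + Int.fract r..L + Int.fract r, f x := by
  have hIco : ∀ a b : ℝ, a ≤ b → ∫ x in Ico a b, f x = ∫ x in a..b, f x := fun a b hab => by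
    rw [integral_Ico_eq_integral_Ioo, ← integral_Ioc_eq_integral_Ioo,
      intervalIntegral.integral_of_le hab]
  have hdisj : Disjoint (Ico 0 α) (Ico (α + r) (L + r)) :=
    Ico_disjoint_Ico_same.mono_right (Ico_subset_Ico_left (by linarith))
  rw [twoIntervals, setIntegral_union hdisj measurableSet_Ico
    (hf.integrableOn_Icc.mono_set Ico_subset_Icc_self)
    (hf.integrableOn_Icc.mono_set Ico_subset_Icc_self), hIco _ _ hα, hIco _ _ (by linarith)]
  have hr' : ∀ t, t + r = t + Int.fract r + ⌊r⌋ := fun t => by rw [add_assoc, Int.fract_add_floor]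
  rw [hr' α, hr' L, integral_add_intCast hper]

lemma integral_unit_le_setIntegral_twoIntervals (hf : Continuous f)
    (hper : Function.Periodic f 1) (hnn : 0 ≤ f) {α L r : ℝ} (hα : 0 ≤ α) (hαL : α ≤ L)
    (hr : 0 ≤ r)
    (hcov : (1 ≤ α ∨ 1 ≤ L - α) ∨ (Int.fract r = 0 ∧ 1 ≤ L) ∨
      (1 ≤ L ∧ L < 2 ∧ 2 ≤ L + Int.fract r)) :
    ∫ x in (0 : ℝ)..1, f x ≤ ∫ x in twoIntervals α L r, f x := by
  rw [setIntegral_twoIntervals hf hper hα hαL hr]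
  set s := Int.fract r
  have hs : s < 1 := Int.fract_lt_one r
  have hI₁ : 0 ≤ ∫ x in (0 : ℝ)..α, f x := intervalIntegral.integral_nonneg hα fun x _ => hnn x
  have hI₂ : 0 ≤ ∫ x in α + s..L + s, f x :=
    intervalIntegral.integral_nonneg (by linarith) fun x _ => hnn x
  have hunit : ∀ a b : ℝ, a + 1 ≤ b → ∫ x in (0 : ℝ)..1, f x ≤ ∫ x in a..b, f x :=
    fun _ _ => integral_unit_le_of_add_one_le hf hper hnn
  rcases le_or_gt 1 α with hα1 | hα1
  · linarith [hunit 0 α (by linarith)]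
  rcases hcov with (h | h) | ⟨hs0, hL⟩ | ⟨hL, -, hLs⟩
  · linarith
  · linarith [hunit (α + s) (L + s) (by linarith)]
  · rw [hs0, add_zero, add_zero]
    linarith [hunit 0 L (by linarith),
      integral_le_add_integral_of_overlap hf hnn (a := 0) le_rfl hαL]
  · rcases le_or_gt (α + s) 1 with hαs | hαs
    · linarith [hunit (α + s) (L + s) (by linarith)]
    · -- shifted down by `1`, the second interval overlaps the first and reaches past `1`
      have hshift := integral_add_intCast hper (α + s - 1) (L + s - 1) 1
      push_cast at hshift
      simp only [sub_add_cancel] at hshift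
      linarith [hunit 0 (L + s - 1) (by linarith),
        integral_le_add_integral_of_overlap hf hnn (a := 0) (b := α) (c := α + s - 1)
          (d := L + s - 1) (by linarith) (by linarith)]

end PeriodicIntegral

lemma norm_geom_sum_le {z : ℂ} (hz : ‖z‖ = 1) (hz1 : z ≠ 1) (N : ℕ) :
    ‖∑ j ∈ Finset.range N, z ^ j‖ ≤ 2 / ‖z - 1‖ := by
  rw [geom_sum_eq hz1, norm_div]
  gcongr
  calc ‖z ^ N - 1‖ ≤ ‖z ^ N‖ + ‖(1 : ℂ)‖ := norm_sub_le _ _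
    _ = 2 := by rw [norm_pow, hz]; norm_num

lemma one_sub_cos_le_norm_fExp1_sub_one (t : ℝ) :
    1 - cos (2 * π * t) ≤ ‖fExp1 1 t - 1‖ := by
  have hre : (fExp1 1 t - 1).re = cos (2 * π * t) - 1 := by
    rw [fExp1, show 2 * (π : ℂ) * Complex.I * ((1 : ℤ) : ℝ) * t
        = ((2 * π * t : ℝ) : ℂ) * Complex.I by push_cast; ring,
      Complex.sub_re, Complex.exp_ofReal_mul_I_re, Complex.one_re]
  calc 1 - cos (2 * π * t) = |(fExp1 1 t - 1).re| := by
        rw [hre, abs_of_nonpos (by linarith [cos_le_one (2 * π * t)])]; ring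
    _ ≤ ‖fExp1 1 t - 1‖ := Complex.abs_re_le_norm _

lemma cos_two_pi_mul_le_of_sub_intCast_mem_Icc {t δ : ℝ} (hδ : 0 ≤ δ) (k : ℤ)
    (ht : t - k ∈ Icc δ (1 - δ)) : cos (2 * π * t) ≤ cos (2 * π * δ) := by
  obtain ⟨hlo, hhi⟩ := ht
  have hπ := pi_pos
  rw [← cos_sub_int_mul_two_pi _ k, show 2 * π * t - k * (2 * π) = 2 * π * (t - k) by ring]
  rcases le_or_gt (t - k) (1 / 2) with hu | hu
  · exact cos_le_cos_of_nonneg_of_le_pi (by positivity) (by nlinarith) (by nlinarith)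
  · rw [← cos_two_pi_sub, show 2 * π - 2 * π * (t - k) = 2 * π * (1 - (t - k)) by ring]
    exact cos_le_cos_of_nonneg_of_le_pi (by positivity) (by nlinarith) (by nlinarith)

def dirichletCoeff (N : ℕ) (c : ℝ) : ℤ →₀ ℂ :=
  Finsupp.indicator ((Finset.range N).map Nat.castEmbedding) fun n _ => fExp1 n (-c)

lemma sum_dirichletCoeff {M : Type*} [AddCommMonoid M] (N : ℕ) (c : ℝ) (g : ℤ → ℂ → M)
    (hg : ∀ n, g n 0 = 0) :
    ∑ n ∈ (dirichletCoeff N c).support, g n (dirichletCoeff N c n)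
      = ∑ j ∈ Finset.range N, g j (fExp1 j (-c)) := by
  rw [← Finsupp.sum, dirichletCoeff,
    Finsupp.sum_of_support_subset _ (Finsupp.support_indicator_subset _ _) _ fun n _ => hg n,
    Finset.sum_map]
  exact Finset.sum_congr rfl fun j hj => by
    rw [Finsupp.indicator_of_mem (Finset.mem_map_of_mem _ hj)]; rfl

lemma sum_norm_sq_dirichletCoeff (N : ℕ) (c : ℝ) :
    ∑ n ∈ (dirichletCoeff N c).support, ‖dirichletCoeff N c n‖ ^ 2 = N := by
  rw [sum_dirichletCoeff N c (fun _ z => ‖z‖ ^ 2) (by simp)]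
  simp [norm_fExp1]

lemma trigSum_dirichletCoeff (N : ℕ) (c x : ℝ) :
    trigSum (dirichletCoeff N c) x = ∑ j ∈ Finset.range N, fExp1 1 (x - c) ^ j := by
  rw [trigSum, sum_dirichletCoeff N c (fun n z => z * fExp1 n x) (by simp)]
  refine Finset.sum_congr rfl fun j _ => ?_
  simp only [fExp1, ← Complex.exp_add, ← Complex.exp_nat_mul]
  push_cast
  ring_nf

lemma norm_sq_trigSum_dirichletCoeff_le {N : ℕ} {c δ x : ℝ} (hδ : 0 < δ) (hδ' : δ ≤ 1 / 2)
    {k : ℤ} (hx : x - c - k ∈ Icc δ (1 - δ)) :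
    ‖trigSum (dirichletCoeff N c) x‖ ^ 2 ≤ (2 / (1 - cos (2 * π * δ))) ^ 2 := by
  have hcos : cos (2 * π * δ) < 1 := by
    refine (cos_le_one _).lt_of_ne fun h => ?_
    rw [cos_eq_one_iff_of_lt_of_lt (by nlinarith [pi_pos]) (by nlinarith [pi_pos])] at h
    nlinarith [pi_pos]
  have hdist : 1 - cos (2 * π * δ) ≤ ‖fExp1 1 (x - c) - 1‖ :=
    (sub_le_sub_left (cos_two_pi_mul_le_of_sub_intCast_mem_Icc hδ.le k hx) 1).trans
      (one_sub_cos_le_norm_fExp1_sub_one _)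
  have hz1 : fExp1 1 (x - c) ≠ 1 := fun h => by
    rw [h, sub_self, norm_zero] at hdist
    linarith
  rw [trigSum_dirichletCoeff]
  gcongr
  exact (norm_geom_sum_le (norm_fExp1 1 _) hz1 N).trans (by gcongr)

lemma not_forall_lowerBound_of_gap {J : Set ℝ} (hJ : volume J < ⊤) {c δ : ℝ} (hδ : 0 < δ)
    (hδ' : δ ≤ 1 / 2) (hgap : ∀ x ∈ J, ∃ k : ℤ, x - c - k ∈ Icc δ (1 - δ)) {A : ℝ}
    (hA : 0 < A) :
    ¬ ∀ a : ℤ →₀ ℂ, A * ∑ n ∈ a.support, ‖a n‖ ^ 2 ≤ ∫ x in J, ‖trigSum a x‖ ^ 2 := by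
  intro hlow
  set C := (2 / (1 - cos (2 * π * δ))) ^ 2
  have hupper : ∀ N, ∫ x in J, ‖trigSum (dirichletCoeff N c) x‖ ^ 2 ≤ C * volume.real J := by
    intro N
    refine (Real.le_norm_self _).trans (norm_setIntegral_le_of_norm_le_const hJ fun x hx => ?_)
    obtain ⟨k, hk⟩ := hgap x hx
    rw [Real.norm_of_nonneg (sq_nonneg _)]
    exact norm_sq_trigSum_dirichletCoeff_le hδ hδ' hk
  obtain ⟨N, hN⟩ := exists_nat_gt (C * volume.real J / A)
  have hN' := hlow (dirichletCoeff N c)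
  rw [sum_norm_sq_dirichletCoeff] at hN'
  rw [div_lt_iff₀ hA] at hN
  linarith [hupper N]

lemma exists_gap_twoIntervals {α L r : ℝ} (hα : 0 < α) (hαL : α ≤ L)
    (hsmall : α < 1 ∧ L - α < 1) (hfract : Int.fract r = 0 → L < 1)
    (hL2 : 1 ≤ L → L < 2 → L + Int.fract r < 2) :
    ∃ c δ : ℝ, 0 < δ ∧ δ ≤ 1 / 2 ∧
      ∀ x ∈ twoIntervals α L r, ∃ k : ℤ, x - c - k ∈ Icc δ (1 - δ) := by
  obtain ⟨hα1, hLα⟩ := hsmall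
  -- Modulo 1, `J` is `[0, α) ∪ [α + s, L + s)`; the gap is centred in `[L, 1]` if `s = 0`,
  -- and in `(max α (L + s - 1), min (α + s) 1)` otherwise.
  set s := Int.fract r
  have hr : r = ⌊r⌋ + s := (Int.floor_add_fract r).symm
  rcases (Int.fract_nonneg r).eq_or_lt with hs | hs
  · have hL := hfract hs.symm
    refine ⟨(L + 1) / 2, (1 - L) / 4, by linarith, by linarith, ?_⟩
    rintro x (⟨hx₀, hx₁⟩ | ⟨hx₀, hx₁⟩)
    · exact ⟨-1, by push_cast; constructor <;> linarith⟩
    · exact ⟨⌊r⌋ - 1, by push_cast; constructor <;> linarith⟩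
  · have hLs : L + s < 2 := by
      rcases le_or_gt 1 L with hL | hL
      · exact hL2 hL (by linarith)
      · linarith [Int.fract_lt_one r]
    set lo := max α (L + s - 1)
    set hi := min (α + s) 1
    have hlo : α ≤ lo ∧ L + s - 1 ≤ lo := ⟨le_max_left _ _, le_max_right _ _⟩
    have hhi : hi ≤ α + s ∧ hi ≤ 1 := ⟨min_le_left _ _, min_le_right _ _⟩
    have hlohi : lo < hi := max_lt (lt_min (by linarith) hα1) (lt_min (by linarith) (by linarith))
    refine ⟨(lo + hi) / 2, (hi - lo) / 4, by linarith, by linarith, ?_⟩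
    rintro x (⟨hx₀, hx₁⟩ | ⟨hx₀, hx₁⟩)
    · exact ⟨-1, by push_cast; constructor <;> linarith⟩
    · exact ⟨⌊r⌋, by constructor <;> linarith⟩

theorem stmt10 (α L r : ℝ) (hα : 0 < α) (hαL : α < L) (hr : 0 < r) :
    (∃ A B : ℝ, 0 < A ∧ A ≤ B ∧
      ∀ a : ℤ →₀ ℂ,
        A * ∑ n ∈ a.support, ‖a n‖ ^ 2
            ≤ ∫ x in Ico 0 α ∪ Ico (α + r) (L + r),
                ‖∑ n ∈ a.support, a n * fExp1 n x‖ ^ 2 ∧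
        ∫ x in Ico 0 α ∪ Ico (α + r) (L + r),
                ‖∑ n ∈ a.support, a n * fExp1 n x‖ ^ 2
            ≤ B * ∑ n ∈ a.support, ‖a n‖ ^ 2) ↔
      ((1 ≤ α ∨ 1 ≤ L - α) ∨
        (Int.fract r = 0 ∧ 1 ≤ L) ∨
        (1 ≤ L ∧ L < 2 ∧ 2 ≤ L + Int.fract r)) := by
  have hJ : twoIntervals α L r ⊆ Ico 0 (⌈L + r⌉₊ : ℝ) := by
    rintro x (⟨hx₀, hx₁⟩ | ⟨hx₀, hx₁⟩) <;> exact ⟨by linarith, by linarith [Nat.le_ceil (L + r)]⟩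
  constructor
  · rintro ⟨A, _, hA, -, hbounds⟩
    by_contra! hcov
    obtain ⟨hsmall, hfract, hL2⟩ := hcov
    obtain ⟨c, δ, hδ, hδ', hgap⟩ := exists_gap_twoIntervals hα hαL.le hsmall hfract hL2
    exact not_forall_lowerBound_of_gap ((measure_mono hJ).trans_lt measure_Ico_lt_top) hδ hδ'
      hgap hA fun a => (hbounds a).1
  · intro hcov
    refine ⟨1, ⌈L + r⌉₊, one_pos, Nat.one_le_cast.2 (Nat.ceil_pos.2 (by linarith)), fun a => ?_⟩
    have hcont : Continuous fun x => ‖trigSum a x‖ ^ 2 := (continuous_trigSum a).norm.pow 2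
    have hper := (periodic_trigSum a).comp fun z => ‖z‖ ^ 2
    have hnn : 0 ≤ fun x => ‖trigSum a x‖ ^ 2 := fun x => sq_nonneg _
    rw [one_mul, ← integral_norm_sq_trigSum]
    exact ⟨integral_unit_le_setIntegral_twoIntervals hcont hper hnn hα.le hαL.le hr.le hcov,
      setIntegral_le_of_subset_Ico hcont hper hnn _ hJ⟩
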